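/- There exist unique formal power series y, y₀, y₃, y₄ over ℚ with constant term 0 satisfying the system: y = y₀ + y₃ + y₄, y₀ = y⁵ + y·y₀ - z·y + z, y₃ = y₀²·(1 + 2y₀), y₄ = (y₀ + y₄)³. The resulting series y has initial coefficients (from z¹) 1, 1, 3, 0, 4, 8, 65, 229, 946. -/

import Mathlib

/-!
Substituting `y = y₀ + y₃ + y₄` leaves a fixed-point problem for `(y₀, y₃, y₄)`. On triples with
zero constant terms the resulting map is a contraction for the `X`-adic filtration: every term
is either `X` times an unknown or at least quadratic in the unknowns, so agreement modulo `X ^ n`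
of the inputs gives agreement modulo `X ^ (n + 1)` of the outputs. The Banach fixed point
argument in the `X`-adically complete module `R⟦X⟧³` gives existence and uniqueness, and any
triple that is fixed modulo `X ^ 10` agrees with the fixed point modulo `X ^ 10`; an explicit
polynomial triple fixed modulo `X ^ 10` then yields the first coefficients.
-/

open Function PowerSeries

section AdicContraction

variable {R M : Type*} [CommRing R] [AddCommGroup M] [Module R M]

/-- Only required on `I • ⊤`: a map without linear terms, such as `x ↦ x ^ 2`, gains a power
of `I` only between arguments that already lie in `I • ⊤`. -/
def IsAdicContraction (I : Ideal R) (F : M → M) : Prop :=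
  ∀ ⦃x y : M⦄, x ∈ I • (⊤ : Submodule R M) → y ∈ I • (⊤ : Submodule R M) → ∀ n : ℕ,
    x ≡ y [SMOD I ^ n • (⊤ : Submodule R M)] → F x ≡ F y [SMOD I ^ (n + 1) • (⊤ : Submodule R M)]

namespace IsAdicContraction

variable {I : Ideal R} {F : M → M}

theorem mapsTo (hF : IsAdicContraction I F) (h₀ : F 0 ∈ I • (⊤ : Submodule R M)) :
    Set.MapsTo F (I • ⊤ : Submodule R M) (I • ⊤ : Submodule R M) := fun x hx ↦ by
  have h := SModEq.sub_mem.mp (hF hx (zero_mem _) 0 (by simp))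
  rw [zero_add, pow_one] at h
  simpa using add_mem h h₀

theorem smodEq_of_apply_smodEq (hF : IsAdicContraction I F) {x y : M}
    (hx : x ∈ I • (⊤ : Submodule R M)) (hy : y ∈ I • (⊤ : Submodule R M)) {N : ℕ}
    (hxN : F x ≡ x [SMOD I ^ N • (⊤ : Submodule R M)])
    (hyN : F y ≡ y [SMOD I ^ N • (⊤ : Submodule R M)]) :
    x ≡ y [SMOD I ^ N • (⊤ : Submodule R M)] := by
  suffices ∀ k ≤ N, x ≡ y [SMOD I ^ k • (⊤ : Submodule R M)] from this N le_rfl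
  intro k
  induction k with
  | zero => simp
  | succ k ih =>
    intro hk
    have hle := Submodule.pow_smul_top_le I M hk
    exact ((hxN.mono hle).symm.trans (hF hx hy k (ih (by omega)))).trans (hyN.mono hle)

theorem eq_of_isFixedPt [IsHausdorff I M] (hF : IsAdicContraction I F) {x y : M}
    (hx : x ∈ I • (⊤ : Submodule R M)) (hy : y ∈ I • (⊤ : Submodule R M))
    (hFx : IsFixedPt F x) (hFy : IsFixedPt F y) : x = y :=
  (IsHausdorff.eq_iff_smodEq (I := I)).mpr fun _ ↦
    hF.smodEq_of_apply_smodEq hx hy (by rw [hFx.eq]) (by rw [hFy.eq])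

theorem exists_isFixedPt [IsPrecomplete I M] [IsHausdorff I M] (hF : IsAdicContraction I F)
    (h₀ : F 0 ∈ I • (⊤ : Submodule R M)) :
    ∃ x ∈ I • (⊤ : Submodule R M), IsFixedPt F x := by
  set a : ℕ → M := fun n ↦ F^[n] 0
  have ha : ∀ n, a n ∈ I • (⊤ : Submodule R M) :=
    fun n ↦ (hF.mapsTo h₀).iterate n (zero_mem _)
  have hstep : ∀ n, a n ≡ a (n + 1) [SMOD I ^ n • (⊤ : Submodule R M)] := by
    intro n
    induction n with
    | zero => simp
    | succ n ih => simpa only [a, iterate_succ_apply'] using hF (ha n) (ha (n + 1)) n ih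
  have hcauchy : ∀ {m n}, m ≤ n → a m ≡ a n [SMOD I ^ m • (⊤ : Submodule R M)] := by
    intro m n hmn
    induction n, hmn using Nat.le_induction with
    | base => rfl
    | succ n hmn ih => exact ih.trans ((hstep n).mono (Submodule.pow_smul_top_le I M hmn))
  obtain ⟨L, hL⟩ := IsPrecomplete.prec inferInstance hcauchy
  have hL₁ : L ∈ I • (⊤ : Submodule R M) := by
    have := SModEq.sub_mem.mp (hL 1)
    rw [pow_one] at this
    simpa using sub_mem (ha 1) this
  refine ⟨L, hL₁, (IsHausdorff.eq_iff_smodEq (I := I)).mpr fun n ↦ ?_⟩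
  have h := hF hL₁ (ha n) n (hL n).symm
  rw [show F (a n) = a (n + 1) from (iterate_succ_apply' F n 0).symm] at h
  exact (h.trans (hL (n + 1))).mono (Submodule.pow_smul_top_le I M n.le_succ)

theorem existsUnique_isFixedPt [IsAdicComplete I M] (hF : IsAdicContraction I F)
    (h₀ : F 0 ∈ I • (⊤ : Submodule R M)) :
    ∃! x, x ∈ I • (⊤ : Submodule R M) ∧ IsFixedPt F x :=
  let ⟨x, hx, hFx⟩ := hF.exists_isFixedPt h₀
  ⟨x, ⟨hx, hFx⟩, fun _ ⟨hy, hFy⟩ ↦ hF.eq_of_isFixedPt hy hx hFy hFx⟩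

end IsAdicContraction

end AdicContraction

section Prod

variable {R M N : Type*} [CommRing R] [AddCommGroup M] [Module R M] [AddCommGroup N] [Module R N]
  {I : Ideal R}

theorem Submodule.smul_top_prod :
    (I • ⊤ : Submodule R (M × N)) = (I • ⊤ : Submodule R M).prod (I • ⊤ : Submodule R N) := by
  refine le_antisymm (Submodule.smul_le.mpr fun r hr x _ ↦ ?_) fun ⟨a, b⟩ ⟨ha, hb⟩ ↦ ?_
  · exact ⟨Submodule.smul_mem_smul hr trivial, Submodule.smul_mem_smul hr trivial⟩
  · have ha' := Submodule.mem_map_of_mem (f := LinearMap.inl R M N) ha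
    have hb' := Submodule.mem_map_of_mem (f := LinearMap.inr R M N) hb
    rw [Submodule.map_smul''] at ha' hb'
    simpa using add_mem (Submodule.smul_mono le_rfl le_top ha')
      (Submodule.smul_mono le_rfl le_top hb')

theorem SModEq.prod_iff {x y : M × N} :
    x ≡ y [SMOD (I • ⊤ : Submodule R (M × N))] ↔
      x.1 ≡ y.1 [SMOD (I • ⊤ : Submodule R M)] ∧ x.2 ≡ y.2 [SMOD (I • ⊤ : Submodule R N)] := by
  simp only [SModEq.sub_mem, Submodule.smul_top_prod, Submodule.mem_prod, Prod.fst_sub,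
    Prod.snd_sub]

instance [IsHausdorff I M] [IsHausdorff I N] : IsHausdorff I (M × N) where
  haus' x hx := Prod.ext (IsHausdorff.haus' (I := I) x.1 fun n ↦ (SModEq.prod_iff.mp (hx n)).1)
    (IsHausdorff.haus' (I := I) x.2 fun n ↦ (SModEq.prod_iff.mp (hx n)).2)

instance [IsPrecomplete I M] [IsPrecomplete I N] : IsPrecomplete I (M × N) where
  prec' f hf := by
    obtain ⟨L₁, h₁⟩ := IsPrecomplete.prec' (I := I) (fun n ↦ (f n).1)
      fun hmn ↦ (SModEq.prod_iff.mp (hf hmn)).1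
    obtain ⟨L₂, h₂⟩ := IsPrecomplete.prec' (I := I) (fun n ↦ (f n).2)
      fun hmn ↦ (SModEq.prod_iff.mp (hf hmn)).2
    exact ⟨(L₁, L₂), fun n ↦ SModEq.prod_iff.mpr ⟨h₁ n, h₂ n⟩⟩

instance [IsAdicComplete I M] [IsAdicComplete I N] : IsAdicComplete I (M × N) where

end Prod

section Principal

variable {A : Type*} [CommRing A] {a x y : A}

theorem mem_span_singleton_smul_top_iff :
    x ∈ Ideal.span {a} • (⊤ : Submodule A A) ↔ a ∣ x := by
  rw [smul_eq_mul, Ideal.mul_top, Ideal.mem_span_singleton]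

theorem smodEq_span_singleton_pow_iff {n : ℕ} :
    x ≡ y [SMOD Ideal.span {a} ^ n • (⊤ : Submodule A A)] ↔ a ^ n ∣ x - y := by
  rw [SModEq.sub_mem, Ideal.span_singleton_pow, mem_span_singleton_smul_top_iff]

theorem pow_succ_dvd_mul_sub_mul {u u' v v' : A} {n : ℕ} (hu : a ∣ u) (hv' : a ∣ v')
    (hdu : a ^ n ∣ u - u') (hdv : a ^ n ∣ v - v') : a ^ (n + 1) ∣ u * v - u' * v' := by
  rw [show u * v - u' * v' = u * (v - v') + (u - u') * v' by ring, pow_succ']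
  exact dvd_add (mul_dvd_mul hu hdv) (by rw [mul_comm a]; exact mul_dvd_mul hdu hv')

theorem pow_succ_dvd_pow_sub_pow {u v : A} {n k : ℕ} (hk : 2 ≤ k) (hu : a ∣ u) (hv : a ∣ v)
    (huv : a ^ n ∣ u - v) : a ^ (n + 1) ∣ u ^ k - v ^ k := by
  obtain ⟨j, rfl⟩ := Nat.exists_eq_add_of_le' hk
  rw [pow_succ' u, pow_succ' v]
  exact pow_succ_dvd_mul_sub_mul hu (dvd_pow hv j.succ_ne_zero) huv
    (huv.trans (sub_dvd_pow_sub_pow u v _))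

end Principal

section Dissection

variable {R : Type*} [CommRing R]

local notation "𝔪" => Ideal.span {(X : R⟦X⟧)}

noncomputable def dissectionMap (t : R⟦X⟧ × R⟦X⟧ × R⟦X⟧) : R⟦X⟧ × R⟦X⟧ × R⟦X⟧ :=
  let y := t.1 + t.2.1 + t.2.2
  (y ^ 5 + y * t.1 - X * y + X, t.1 ^ 2 * (1 + 2 * t.1), (t.1 + t.2.2) ^ 3)

theorem mem_span_X_smul_top_iff {t : R⟦X⟧ × R⟦X⟧ × R⟦X⟧} :
    t ∈ 𝔪 • (⊤ : Submodule R⟦X⟧ (R⟦X⟧ × R⟦X⟧ × R⟦X⟧)) ↔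
      X ∣ t.1 ∧ X ∣ t.2.1 ∧ X ∣ t.2.2 := by
  simp only [Submodule.smul_top_prod, Submodule.mem_prod, mem_span_singleton_smul_top_iff]

theorem smodEq_span_X_pow_iff {s t : R⟦X⟧ × R⟦X⟧ × R⟦X⟧} {n : ℕ} :
    s ≡ t [SMOD 𝔪 ^ n • (⊤ : Submodule R⟦X⟧ (R⟦X⟧ × R⟦X⟧ × R⟦X⟧))] ↔
      X ^ n ∣ s.1 - t.1 ∧ X ^ n ∣ s.2.1 - t.2.1 ∧ X ^ n ∣ s.2.2 - t.2.2 := by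
  simp only [SModEq.prod_iff, smodEq_span_singleton_pow_iff]

theorem isAdicContraction_dissectionMap :
    IsAdicContraction 𝔪 (dissectionMap (R := R)) := by
  intro s t hs ht n hst
  rw [mem_span_X_smul_top_iff] at hs ht
  rw [smodEq_span_X_pow_iff] at hst ⊢
  obtain ⟨hs₀, hs₃, hs₄⟩ := hs
  obtain ⟨ht₀, ht₃, ht₄⟩ := ht
  obtain ⟨d₀, d₃, d₄⟩ := hst
  have hys : X ∣ s.1 + s.2.1 + s.2.2 := dvd_add (dvd_add hs₀ hs₃) hs₄
  have hyt : X ∣ t.1 + t.2.1 + t.2.2 := dvd_add (dvd_add ht₀ ht₃) ht₄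
  have dy : X ^ n ∣ (s.1 + s.2.1 + s.2.2) - (t.1 + t.2.1 + t.2.2) := by
    rw [add_sub_add_comm, add_sub_add_comm]
    exact dvd_add (dvd_add d₀ d₃) d₄
  refine ⟨?_, ?_, ?_⟩ <;> dsimp only [dissectionMap]
  · set y := s.1 + s.2.1 + s.2.2
    set y' := t.1 + t.2.1 + t.2.2
    rw [show y ^ 5 + y * s.1 - X * y + X - (y' ^ 5 + y' * t.1 - X * y' + X) =
      (y ^ 5 - y' ^ 5) + (y * s.1 - y' * t.1) - X * (y - y') by ring]
    have hXy : X ^ (n + 1) ∣ X * (y - y') := by rw [pow_succ']; exact mul_dvd_mul_left X dy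
    exact dvd_sub (dvd_add (pow_succ_dvd_pow_sub_pow (by norm_num) hys hyt dy)
      (pow_succ_dvd_mul_sub_mul hys ht₀ dy d₀)) hXy
  · rw [show s.1 ^ 2 * (1 + 2 * s.1) - t.1 ^ 2 * (1 + 2 * t.1) =
      (s.1 ^ 2 - t.1 ^ 2) + 2 * (s.1 ^ 3 - t.1 ^ 3) by ring]
    exact dvd_add (pow_succ_dvd_pow_sub_pow le_rfl hs₀ ht₀ d₀)
      (dvd_mul_of_dvd_right (pow_succ_dvd_pow_sub_pow (by norm_num) hs₀ ht₀ d₀) 2)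
  · refine pow_succ_dvd_pow_sub_pow (by norm_num) (dvd_add hs₀ hs₄) (dvd_add ht₀ ht₄) ?_
    rw [add_sub_add_comm]
    exact dvd_add d₀ d₄

theorem dissectionMap_zero_mem :
    dissectionMap 0 ∈ 𝔪 • (⊤ : Submodule R⟦X⟧ (R⟦X⟧ × R⟦X⟧ × R⟦X⟧)) := by
  rw [mem_span_X_smul_top_iff]
  simp [dissectionMap]

theorem dissection_system_iff {y y₀ y₃ y₄ : R⟦X⟧} :
    (constantCoeff y = 0 ∧ constantCoeff y₀ = 0 ∧ constantCoeff y₃ = 0 ∧ constantCoeff y₄ = 0 ∧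
      y = y₀ + y₃ + y₄ ∧ y₀ = y ^ 5 + y * y₀ - X * y + X ∧ y₃ = y₀ ^ 2 * (1 + 2 * y₀) ∧
      y₄ = (y₀ + y₄) ^ 3) ↔
    (y₀, y₃, y₄) ∈ 𝔪 • (⊤ : Submodule R⟦X⟧ (R⟦X⟧ × R⟦X⟧ × R⟦X⟧)) ∧
      IsFixedPt dissectionMap (y₀, y₃, y₄) ∧ y = y₀ + y₃ + y₄ := by
  simp only [mem_span_X_smul_top_iff, IsFixedPt, dissectionMap, Prod.mk.injEq, ← X_dvd_iff]
  constructor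
  · rintro ⟨-, h₀, h₃, h₄, rfl, e₀, e₃, e₄⟩
    exact ⟨⟨h₀, h₃, h₄⟩, ⟨e₀.symm, e₃.symm, e₄.symm⟩, rfl⟩
  · rintro ⟨⟨h₀, h₃, h₄⟩, ⟨e₀, e₃, e₄⟩, rfl⟩
    exact ⟨dvd_add (dvd_add h₀ h₃) h₄, h₀, h₃, h₄, rfl, e₀.symm, e₃.symm, e₄.symm⟩

/-- The solution truncated below degree `10`. -/
noncomputable def dissectionApprox : R⟦X⟧ × R⟦X⟧ × R⟦X⟧ :=
  (X + X ^ 5 + 6 * X ^ 6 + 32 * X ^ 7 + 111 * X ^ 8 + 366 * X ^ 9,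
    X ^ 2 + 2 * X ^ 3 + 2 * X ^ 6 + 18 * X ^ 7 + 100 * X ^ 8 + 414 * X ^ 9,
    X ^ 3 + 3 * X ^ 5 + 15 * X ^ 7 + 18 * X ^ 8 + 166 * X ^ 9)

theorem dissectionApprox_mem :
    dissectionApprox ∈ 𝔪 • (⊤ : Submodule R⟦X⟧ (R⟦X⟧ × R⟦X⟧ × R⟦X⟧)) := by
  rw [mem_span_X_smul_top_iff]
  simp [dissectionApprox, X_dvd_iff]

set_option maxHeartbeats 400000 in
theorem dissectionApprox_smodEq : dissectionApprox ≡ dissectionMap dissectionApprox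
    [SMOD 𝔪 ^ 10 • (⊤ : Submodule R⟦X⟧ (R⟦X⟧ × R⟦X⟧ × R⟦X⟧))] := by
  rw [smodEq_span_X_pow_iff]
  refine ⟨⟨-1028 - 2131*X - 5934*X^2 - 20734*X^3 - 66847*X^4 - 201625*X^5 - 477476*X^6 - 1144610*X^7
    - 2538516*X^8 - 6701035*X^9 - 20081645*X^10 - 60718110*X^11 - 145136380*X^12 - 328198980*X^13
    - 634320180*X^14 - 1457575594*X^15 - 3567769460*X^16 - 10143127820*X^17 - 25760978280*X^18
    - 59766187095*X^19 - 111715646083*X^20 - 207330048765*X^21 - 379573712070*X^22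
    - 908695651655*X^23 - 2207930420105*X^24 - 5326044845240*X^25 - 10640542050425*X^26
    - 18218357056480*X^27 - 24940155812450*X^28 - 40439916039465*X^29 - 76951375934709*X^30
    - 187326862355490*X^31 - 391535352448680*X^32 - 704244803276960*X^33 - 917001470879120*X^34
    - 757627416114976*X^35, ?_⟩,
    ⟨-1399 - 2214*X - 172*X^2 - 1206*X^3 - 6724*X^4 - 30026*X^5 - 104757*X^6 - 296130*X^7
      - 624870*X^8 - 826980*X^9 - 129816*X^10 - 614806*X^11 - 2456316*X^12 - 8343144*X^13
      - 23158062*X^14 - 52776468*X^15 - 89214696*X^16 - 98055792*X^17, ?_⟩,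
    ⟨-423 - 1938*X - 936*X^2 - 4617*X^3 - 5319*X^4 - 26935*X^5 - 60606*X^6 - 226674*X^7 - 480474*X^8
      - 1124715*X^9 - 687582*X^10 - 2028407*X^11 - 3701637*X^12 - 11738841*X^13 - 26594217*X^14
      - 66465420*X^15 - 109530288*X^16 - 150568768*X^17, ?_⟩⟩ <;>
  · simp only [dissectionMap, dissectionApprox]
    ring

theorem coeff_of_isFixedPt_dissectionMap {t : R⟦X⟧ × R⟦X⟧ × R⟦X⟧}
    (ht : t ∈ 𝔪 • (⊤ : Submodule R⟦X⟧ (R⟦X⟧ × R⟦X⟧ × R⟦X⟧)))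
    (hFt : IsFixedPt dissectionMap t) {k : ℕ} (hk : k < 10) :
    coeff k (t.1 + t.2.1 + t.2.2) = coeff k
      (X + X ^ 2 + 3 * X ^ 3 + 4 * X ^ 5 + 8 * X ^ 6 + 65 * X ^ 7 + 229 * X ^ 8 + 946 * X ^ 9 :
        R⟦X⟧) := by
  obtain ⟨d₀, d₃, d₄⟩ := smodEq_span_X_pow_iff.mp <|
    isAdicContraction_dissectionMap.smodEq_of_apply_smodEq ht dissectionApprox_mem
      (by rw [hFt.eq]; exact SModEq.refl t) dissectionApprox_smodEq.symm
  have hsum : X ^ 10 ∣ (t.1 + t.2.1 + t.2.2) -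
      (dissectionApprox.1 + dissectionApprox.2.1 + dissectionApprox.2.2 : R⟦X⟧) := by
    rw [add_sub_add_comm, add_sub_add_comm]
    exact dvd_add (dvd_add d₀ d₃) d₄
  have happrox : (X + X ^ 2 + 3 * X ^ 3 + 4 * X ^ 5 + 8 * X ^ 6 + 65 * X ^ 7 + 229 * X ^ 8 +
      946 * X ^ 9 : R⟦X⟧) = dissectionApprox.1 + dissectionApprox.2.1 + dissectionApprox.2.2 := by
    simp only [dissectionApprox]
    ring
  rw [happrox, ← sub_eq_zero, ← map_sub]
  exact X_pow_dvd_iff.mp hsum k hk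

end Dissection

/-- There exist unique formal power series `y, y₀, y₃, y₄` over `ℚ`, all with constant term
`0`, satisfying the system `y = y₀ + y₃ + y₄`, `y₀ = y⁵ + y·y₀ - z·y + z`,
`y₃ = y₀²·(1 + 2y₀)`, `y₄ = (y₀ + y₄)³`, and the resulting `y` has initial coefficients
`1, 1, 3, 0, 4, 8, 65, 229, 946` (for `z¹` through `z⁹`).  This is the generating function
of polygon dissections avoiding 5-cycles as subgraphs. -/
theorem five_cycle_free_dissections :
    (∃! p : PowerSeries ℚ × PowerSeries ℚ × PowerSeries ℚ × PowerSeries ℚ,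
        PowerSeries.constantCoeff p.1 = 0 ∧
        PowerSeries.constantCoeff p.2.1 = 0 ∧
        PowerSeries.constantCoeff p.2.2.1 = 0 ∧
        PowerSeries.constantCoeff p.2.2.2 = 0 ∧
        p.1 = p.2.1 + p.2.2.1 + p.2.2.2 ∧
        p.2.1 = p.1 ^ 5 + p.1 * p.2.1 - X * p.1 + X ∧
        p.2.2.1 = p.2.1 ^ 2 * (1 + 2 * p.2.1) ∧
        p.2.2.2 = (p.2.1 + p.2.2.2) ^ 3) ∧
    (∀ y y₀ y₃ y₄ : PowerSeries ℚ,
        PowerSeries.constantCoeff y = 0 →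
        PowerSeries.constantCoeff y₀ = 0 →
        PowerSeries.constantCoeff y₃ = 0 →
        PowerSeries.constantCoeff y₄ = 0 →
        y = y₀ + y₃ + y₄ →
        y₀ = y ^ 5 + y * y₀ - X * y + X →
        y₃ = y₀ ^ 2 * (1 + 2 * y₀) →
        y₄ = (y₀ + y₄) ^ 3 →
        PowerSeries.coeff 1 y = 1 ∧
        PowerSeries.coeff 2 y = 1 ∧
        PowerSeries.coeff 3 y = 3 ∧
        PowerSeries.coeff 4 y = 0 ∧
        PowerSeries.coeff 5 y = 4 ∧
        PowerSeries.coeff 6 y = 8 ∧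
        PowerSeries.coeff 7 y = 65 ∧
        PowerSeries.coeff 8 y = 229 ∧
        PowerSeries.coeff 9 y = 946) := by
  constructor
  · obtain ⟨t, ⟨ht, hFt⟩, huniq⟩ :=
      (isAdicContraction_dissectionMap (R := ℚ)).existsUnique_isFixedPt dissectionMap_zero_mem
    refine ⟨(t.1 + t.2.1 + t.2.2, t), dissection_system_iff.mpr ⟨ht, hFt, rfl⟩, ?_⟩
    rintro ⟨y, y₀, y₃, y₄⟩ h
    dsimp only at h
    obtain ⟨hS, hF, rfl⟩ := dissection_system_iff.mp h
    obtain rfl := huniq _ ⟨hS, hF⟩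
    rfl
  · intro y y₀ y₃ y₄ c c₀ c₃ c₄ e e₀ e₃ e₄
    obtain ⟨hS, hF, rfl⟩ := dissection_system_iff.mp ⟨c, c₀, c₃, c₄, e, e₀, e₃, e₄⟩
    refine ⟨?_, ?_, ?_, ?_, ?_, ?_, ?_, ?_, ?_⟩ <;>
    · rw [coeff_of_isFixedPt_dissectionMap hS hF (by norm_num)]
      simp [← map_ofNat (C (R := ℚ)), coeff_C_mul, coeff_X_pow, coeff_X]
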